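/- Let L = L(a,b) be the free Lie ring on two generators and L_{2,n} its homogeneous component spanned by commutators with 2 occurrences of a and n of b. Then the set { [C_k, C_l] : k > l, k + l = n } is a ℤ-basis of L_{2,n}, where Cₙ = [a,_n b]. -/

import Mathlib

open FreeLieAlgebra

/-- Bracket monomials in the free Lie ring on two generators `a = of false`, `b = of true`,
with `p` occurrences of `a` and `q` occurrences of `b`. -/
inductive IsBracketMono : ℕ → ℕ → FreeLieAlgebra ℤ Bool → Prop
  | a : IsBracketMono 1 0 (of ℤ false)
  | b : IsBracketMono 0 1 (of ℤ true)
  | lie {p q r s : ℕ} {x y : FreeLieAlgebra ℤ Bool} :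
      IsBracketMono p q x → IsBracketMono r s y → IsBracketMono (p + r) (q + s) ⁅x, y⁆

/-- The bihomogeneous component `L_{p,q}` of the free Lie ring on two generators. -/
noncomputable def Lcomp (p q : ℕ) : Submodule ℤ (FreeLieAlgebra ℤ Bool) :=
  Submodule.span ℤ {x | IsBracketMono p q x}

/-- The Engel bracket `Cₙ = [a,_n b]`. -/
noncomputable def C : ℕ → FreeLieAlgebra ℤ Bool
  | 0 => of ℤ false
  | n + 1 => ⁅C n, of ℤ true⁆

/-!
Spanning: a bracket monomial with two `a`'s is `±[u, b]` with `u` of the same kind, or a bracket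
of two multiples of `C`'s. Since `[C k, C l]` is antisymmetric and, by Jacobi,
`[[C k, C l], b] = [C k, C (l+1)] - [C l, C (k+1)]`, induction shows that the `[C k, C l]` with
`k > l` span `L_{2,n}`.

Independence: `ℤ →₀ ℤ` stands for the Laurent polynomials, on which `x ^ (α + 1) d/dx` acts by
`x ^ j ↦ j x ^ (j + α)`; these operators satisfy the Witt relations, so `a ↦ x ^ (α + 1) d/dx`,
`b ↦ x ^ 2 d/dx` is a representation. In it `C k` acts by the multiple
`(1 - α) (-α) ⋯ (2 - α - k)` of `x ^ (α + k + 1) d/dx`. For `α = 1 - m` this factor is the falling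
factorial `m (m-1) ⋯ (m-k+1)`, which vanishes exactly when `k > m`. So the functionals taking
the coefficient of `x ^ (n + 2α + 1)` in the image of `x`, for `m = 0, 1, 2, …`, are triangular
with respect to the family `[C k, C (n - k)]` ordered by `k`, with nonzero diagonal.
-/

section Triangular

variable {ι κ R M : Type*} [LinearOrder κ] [WellFoundedLT κ] [Ring R] [NoZeroDivisors R]
  [AddCommGroup M] [Module R M]

theorem linearIndependent_of_triangular {v : ι → M} {key : ι → κ}
    (hkey : Function.Injective key) (f : κ → M →ₗ[R] R)
    (hlt : ∀ i K, K < key i → f K (v i) = 0) (hdiag : ∀ i, f (key i) (v i) ≠ 0) :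
    LinearIndependent R v := by
  rw [linearIndependent_iff']
  intro s g hsum
  suffices h : ∀ K, ∀ i ∈ s, key i = K → g i = 0 from fun i hi => h _ i hi rfl
  intro K
  induction K using WellFoundedLT.induction with | _ K ih => ?_
  rintro i hi rfl
  have hf : ∑ j ∈ s, g j * f (key i) (v j) = 0 := by
    simpa using congrArg (f (key i)) hsum
  rw [Finset.sum_eq_single_of_mem i hi] at hf
  · exact (mul_eq_zero.1 hf).resolve_right (hdiag i)
  intro j hj hji
  rcases lt_or_gt_of_ne (hkey.ne hji) with h | h
  · rw [ih _ h j hj rfl, zero_mul]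
  · rw [hlt j _ h, mul_zero]

end Triangular

section Witt

attribute [local instance 100] LieRing.ofAssociativeRing

noncomputable def wittOp (α : ℤ) : Module.End ℤ (ℤ →₀ ℤ) :=
  Finsupp.lsum ℤ fun j => j • Finsupp.lsingle (j + α)

theorem wittOp_single (α j b : ℤ) :
    wittOp α (Finsupp.single j b) = j • Finsupp.single (j + α) b := by
  rw [wittOp, Finsupp.lsum_single, LinearMap.smul_apply, Finsupp.lsingle_apply]

theorem wittOp_lie (α β : ℤ) : ⁅wittOp α, wittOp β⁆ = (β - α) • wittOp (α + β) := by
  refine Finsupp.lhom_ext fun j b => ?_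
  simp only [Ring.lie_def, LinearMap.sub_apply, LinearMap.smul_apply, Module.End.mul_apply,
    wittOp_single, map_smul, smul_smul, add_assoc, add_comm β α, ← sub_smul]
  congr 1
  ring

noncomputable def wittRep (α : ℤ) : FreeLieAlgebra ℤ Bool →ₗ⁅ℤ⁆ Module.End ℤ (ℤ →₀ ℤ) :=
  lift ℤ fun t => cond t (wittOp 1) (wittOp α)

theorem wittRep_C (α : ℤ) (k : ℕ) :
    wittRep α (C k) = (descPochhammer ℤ k).eval (1 - α) • wittOp (α + k) := by
  induction k with
  | zero =>
    rw [C, Nat.cast_zero, add_zero, descPochhammer_zero, Polynomial.eval_one, one_smul]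
    exact lift_of_apply _ _
  | succ k ih =>
    rw [C, LieHom.map_lie, ih, show wittRep α (of ℤ true) = wittOp 1 from lift_of_apply _ _,
      smul_lie, wittOp_lie, smul_smul, descPochhammer_succ_eval]
    congr 1
    · ring
    · push_cast; ring_nf

theorem wittRep_lie_C_C (α : ℤ) (k l : ℕ) :
    wittRep α ⁅C k, C l⁆ = ((l - k : ℤ) * (descPochhammer ℤ k).eval (1 - α) *
      (descPochhammer ℤ l).eval (1 - α)) • wittOp (2 * α + (k + l)) := by
  rw [LieHom.map_lie, wittRep_C, wittRep_C, smul_lie, lie_smul, wittOp_lie, smul_smul, smul_smul]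
  congr 1
  · ring
  · ring_nf

noncomputable def wittCoeff (α t : ℤ) : FreeLieAlgebra ℤ Bool →ₗ[ℤ] ℤ :=
  (Finsupp.lapply t : (ℤ →₀ ℤ) →ₗ[ℤ] ℤ) ∘ₗ LinearMap.applyₗ (Finsupp.single 1 1) ∘ₗ
    (wittRep α).toLinearMap

theorem wittCoeff_lie_C_C (m k l : ℕ) :
    wittCoeff (1 - m) (1 + 2 * (1 - m) + (k + l)) ⁅C k, C l⁆ =
      (l - k : ℤ) * m.descFactorial k * m.descFactorial l := by
  change (wittRep _ ⁅C k, C l⁆ (Finsupp.single 1 1)) _ = _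
  rw [wittRep_lie_C_C, LinearMap.smul_apply, wittOp_single, one_smul, Finsupp.smul_apply, add_assoc,
    Finsupp.single_eq_same, smul_eq_mul, mul_one, sub_sub_cancel,
    descPochhammer_eval_eq_descFactorial, descPochhammer_eval_eq_descFactorial]

end Witt

noncomputable def engelBracket (n : ℕ) (p : {p : ℕ × ℕ // p.1 > p.2 ∧ p.1 + p.2 = n}) :
    FreeLieAlgebra ℤ Bool :=
  ⁅C p.1.1, C p.1.2⁆

theorem linearIndependent_engelBracket (n : ℕ) : LinearIndependent ℤ (engelBracket n) := by
  refine linearIndependent_of_triangular (key := fun p => p.1.1)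
    (fun p q (h : p.1.1 = q.1.1) =>
      Subtype.ext (Prod.ext h (by have := p.2.2; have := q.2.2; omega)))
    (fun K => wittCoeff (1 - K) (1 + 2 * (1 - K) + n)) (fun p K hK => ?_) (fun p => ?_)
  all_goals
    obtain ⟨⟨k, l⟩, hlk, rfl⟩ := p
    simp only [engelBracket, Nat.cast_add, wittCoeff_lie_C_C]
  · rw [Nat.descFactorial_of_lt hK, Nat.cast_zero, mul_zero, zero_mul]
  · have hlk : l < k := hlk
    refine mul_ne_zero (mul_ne_zero (by omega) ?_) ?_ <;>
      exact_mod_cast (Nat.descFactorial_pos.2 (by omega)).ne'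

theorem isBracketMono_C (k : ℕ) : IsBracketMono 1 k (C k) := by
  induction k with
  | zero => exact .a
  | succ k ih => exact .lie ih .b

namespace IsBracketMono

variable {p q : ℕ} {x : FreeLieAlgebra ℤ Bool}

theorem eq_zero_or_eq_b (h : IsBracketMono p q x) (hp : p = 0) :
    x = 0 ∨ q = 1 ∧ x = of ℤ true := by
  induction h with
  | a => omega
  | b => exact Or.inr ⟨rfl, rfl⟩
  | lie _ _ ihx ihy =>
    rcases ihx (by omega) with rfl | ⟨-, rfl⟩
    · exact Or.inl (zero_lie _)
    rcases ihy (by omega) with rfl | ⟨-, rfl⟩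
    · exact Or.inl (lie_zero _)
    · exact Or.inl (lie_self _)

theorem exists_eq_smul_C (h : IsBracketMono p q x) (hp : p = 1) : ∃ z : ℤ, x = z • C q := by
  induction h with
  | a => exact ⟨1, (one_smul _ _).symm⟩
  | b => omega
  | @lie p q r s x y hx hy ihx ihy =>
    rcases (by omega : p = 1 ∧ r = 0 ∨ p = 0 ∧ r = 1) with ⟨hp, hr⟩ | ⟨hp, hr⟩
    · obtain ⟨z, rfl⟩ := ihx hp
      rcases hy.eq_zero_or_eq_b hr with rfl | ⟨rfl, rfl⟩
      · exact ⟨0, by rw [lie_zero, zero_smul]⟩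
      · exact ⟨z, by rw [smul_lie]; rfl⟩
    · obtain ⟨z, rfl⟩ := ihy hr
      rcases hx.eq_zero_or_eq_b hp with rfl | ⟨rfl, rfl⟩
      · exact ⟨0, by rw [zero_lie, zero_smul]⟩
      · refine ⟨-z, ?_⟩
        rw [add_comm, lie_smul, ← lie_skew, neg_smul, smul_neg]
        rfl

end IsBracketMono

theorem lie_C_C_mem_span {k l n : ℕ} (hkl : k + l = n) :
    ⁅C k, C l⁆ ∈ Submodule.span ℤ (Set.range (engelBracket n)) := by
  rcases lt_trichotomy l k with h | rfl | h
  · exact Submodule.subset_span ⟨⟨(k, l), h, hkl⟩, rfl⟩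
  · rw [lie_self]
    exact zero_mem _
  · rw [← lie_skew]
    exact neg_mem (Submodule.subset_span ⟨⟨(l, k), h, by omega⟩, rfl⟩)

theorem lie_b_mem_span {n : ℕ} {x : FreeLieAlgebra ℤ Bool}
    (hx : x ∈ Submodule.span ℤ (Set.range (engelBracket n))) :
    ⁅x, of ℤ true⁆ ∈ Submodule.span ℤ (Set.range (engelBracket (n + 1))) := by
  rw [← lie_skew]
  refine neg_mem ?_
  suffices h : Submodule.span ℤ (Set.range (engelBracket n)) ≤
      (Submodule.span ℤ (Set.range (engelBracket (n + 1)))).comap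
        (LieAlgebra.ad ℤ _ (of ℤ true)) from h hx
  rw [Submodule.span_le]
  rintro _ ⟨⟨⟨k, l⟩, -, rfl⟩, rfl⟩
  have hb (j : ℕ) : ⁅of ℤ true, C j⁆ = -C (j + 1) := by rw [← lie_skew]; rfl
  change ⁅of ℤ true, ⁅C k, C l⁆⁆ ∈ Submodule.span ℤ (Set.range (engelBracket (k + l + 1)))
  rw [leibniz_lie, hb, hb, neg_lie, lie_neg]
  exact add_mem (neg_mem (lie_C_C_mem_span (by omega))) (neg_mem (lie_C_C_mem_span (by omega)))

theorem IsBracketMono.mem_span_engelBracket {p q : ℕ} {x : FreeLieAlgebra ℤ Bool}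
    (h : IsBracketMono p q x) (hp : p = 2) :
    x ∈ Submodule.span ℤ (Set.range (engelBracket q)) := by
  induction h with
  | a | b => omega
  | @lie p q r s x y hx hy ihx ihy =>
    rcases (by omega : p = 2 ∧ r = 0 ∨ p = 1 ∧ r = 1 ∨ p = 0 ∧ r = 2)
      with ⟨hp, hr⟩ | ⟨hp, hr⟩ | ⟨hp, hr⟩
    · rcases hy.eq_zero_or_eq_b hr with rfl | ⟨rfl, rfl⟩
      · rw [lie_zero]; exact zero_mem _
      · exact lie_b_mem_span (ihx hp)
    · obtain ⟨z, rfl⟩ := hx.exists_eq_smul_C hp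
      obtain ⟨w, rfl⟩ := hy.exists_eq_smul_C hr
      rw [smul_lie, lie_smul]
      exact Submodule.smul_mem _ _ (Submodule.smul_mem _ _ (lie_C_C_mem_span rfl))
    · rcases hx.eq_zero_or_eq_b hp with rfl | ⟨rfl, rfl⟩
      · rw [zero_lie]; exact zero_mem _
      · rw [add_comm 1 s, ← lie_skew]
        exact neg_mem (lie_b_mem_span (ihy hr))

theorem Lcomp_two_eq_span (n : ℕ) : Lcomp 2 n = Submodule.span ℤ (Set.range (engelBracket n)) := by
  refine le_antisymm (Submodule.span_le.2 fun x hx => IsBracketMono.mem_span_engelBracket hx rfl)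
    (Submodule.span_le.2 ?_)
  rintro _ ⟨⟨⟨k, l⟩, -, rfl⟩, rfl⟩
  exact Submodule.subset_span ((isBracketMono_C k).lie (isBracketMono_C l))

theorem basis_L2n (n : ℕ) :
    ∃ B : Module.Basis {p : ℕ × ℕ // p.1 > p.2 ∧ p.1 + p.2 = n} ℤ (Lcomp 2 n),
      ∀ p, (B p : FreeLieAlgebra ℤ Bool) = ⁅C p.1.1, C p.1.2⁆ :=
  ⟨(Module.Basis.span (linearIndependent_engelBracket n)).map
      (LinearEquiv.ofEq _ _ (Lcomp_two_eq_span n).symm),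
    fun p => by simp [Module.Basis.span_apply, engelBracket]⟩
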